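/- arXiv:1606.08354 — 7 statements merged into one kernel-verified Lean document; each statement's English description precedes it below -/
import Mathlib

section
/- Let E be a finite set, let 𝒜 be a laminar family of subsets of E, and let c : 𝒜 → ℕ be a capacity function. Then the collection ℐ = {I ⊆ E : |I ∩ A| ≤ c(A) for all A ∈ 𝒜} is the collection of independent sets of a matroid on E. -/
open Set

variable {α : Type*}

/-- A circuit: a minimal dependent set. -/
def Matroid.IsCircuit' (M : Matroid α) (C : Set α) : Prop :=
  M.Dep C ∧ ∀ D, D ⊂ C → M.Indep D

/-- The circuit characterization of laminar matroids. -/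
def Matroid.IsLaminar (M : Matroid α) : Prop :=
  ∀ C₁ C₂, M.IsCircuit' C₁ → M.IsCircuit' C₂ → (C₁ ∩ C₂).Nonempty →
    M.closure C₁ ⊆ M.closure C₂ ∨ M.closure C₂ ⊆ M.closure C₁

/-- A laminar family: any two intersecting members are comparable. -/
def IsLaminarFamily (𝒜 : Set (Set α)) : Prop :=
  ∀ A ∈ 𝒜, ∀ B ∈ 𝒜, (A ∩ B).Nonempty → A ⊆ B ∨ B ⊆ A

/-- `M` is presented by the laminar family `𝒜` with capacities `c`. -/
def Matroid.IsLaminarPresBy (M : Matroid α) (E : Set α) (𝒜 : Set (Set α)) (c : Set α → ℕ) :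
    Prop :=
  M.E = E ∧ ∀ I, M.Indep I ↔ I ⊆ E ∧ ∀ A ∈ 𝒜, (I ∩ A).ncard ≤ c A

/-- `M` has some laminar presentation (on its own ground set); this captures being
isomorphic to a laminar matroid `M(E, 𝒜, c)`. -/
def Matroid.HasLaminarPres (M : Matroid α) : Prop :=
  ∃ (𝒜 : Set (Set α)) (c : Set α → ℕ), IsLaminarFamily 𝒜 ∧ (∀ A ∈ 𝒜, A ⊆ M.E) ∧
    M.IsLaminarPresBy M.E 𝒜 c

/-!
Use the matroid independence axioms. The only nontrivial one is augmentation: if `I` and `J` fit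
the capacities, `|I| < |J|`, and no element of `J \ I` can be added to `I`, then every element of
`J \ I` lies in a member `A` of `𝒜` that is tight for `I` (`|I ∩ A| = c A`). By laminarity the
maximal tight members are pairwise disjoint, and on each of them `J` has at most `c A = |I ∩ A|`
elements, while outside their union `J` is contained in `I`. Hence `|J| ≤ |I|`.
-/

def RespectsCapacities (𝒜 : Set (Set α)) (c : Set α → ℕ) (I : Set α) : Prop :=
  ∀ A ∈ 𝒜, (I ∩ A).ncard ≤ c A

theorem IsLaminarFamily.pairwiseDisjoint_maximal {𝒜 𝒮 : Set (Set α)} (h𝒜 : IsLaminarFamily 𝒜)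
    (h𝒮 : 𝒮 ⊆ 𝒜) : {A | Maximal (· ∈ 𝒮) A}.PairwiseDisjoint id := by
  intro A hA B hB hne
  rw [Function.onFun, id, id, disjoint_iff_inter_eq_empty, ← not_nonempty_iff_eq_empty]
  intro hAB
  rcases h𝒜 A (h𝒮 hA.prop) B (h𝒮 hB.prop) hAB with hsub | hsub
  · exact hne (hA.eq_of_subset hB.prop hsub)
  · exact hne (hB.eq_of_superset hA.prop hsub)

theorem ncard_le_ncard_of_sdiff_subset_biUnion {I J : Set α} (hI : I.Finite) (hJ : J.Finite)
    {D : Finset (Set α)} (hD : (D : Set (Set α)).PairwiseDisjoint id)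
    (hJD : ∀ A ∈ D, (J ∩ A).ncard ≤ (I ∩ A).ncard) (hcover : J \ I ⊆ ⋃ A ∈ D, A) :
    J.ncard ≤ I.ncard := by
  set U := ⋃ A ∈ D, A
  have ncard_inter_U : ∀ S : Set α, S.Finite → (S ∩ U).ncard = ∑ A ∈ D, (S ∩ A).ncard := by
    intro S hS
    rw [inter_iUnion₂]
    exact (D.finite_toSet.ncard_biUnion (fun A _ ↦ hS.inter_of_left A)
      (hD.mono fun A ↦ inter_subset_right)).trans (finsum_mem_coe_finset _ _)
  have hJU : J \ U ⊆ I \ U := fun x hx ↦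
    ⟨by_contra fun hxI ↦ hx.2 (hcover ⟨hx.1, hxI⟩), hx.2⟩
  calc J.ncard = (J ∩ U).ncard + (J \ U).ncard :=
        (ncard_inter_add_ncard_sdiff_eq_ncard J U hJ).symm
    _ ≤ (I ∩ U).ncard + (I \ U).ncard := by
      rw [ncard_inter_U J hJ, ncard_inter_U I hI]
      exact add_le_add (Finset.sum_le_sum hJD) (ncard_le_ncard hJU hI.sdiff)
    _ = I.ncard := ncard_inter_add_ncard_sdiff_eq_ncard I U hI

namespace RespectsCapacities

variable {𝒜 : Set (Set α)} {c : Set α → ℕ} {I J : Set α}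

theorem subset (hJ : RespectsCapacities 𝒜 c J) (hJfin : J.Finite) (hIJ : I ⊆ J) :
    RespectsCapacities 𝒜 c I := fun A hA ↦
  (ncard_le_ncard (inter_subset_inter_left A hIJ) (hJfin.inter_of_left A)).trans (hJ A hA)

theorem exists_tight_of_not_insert (hI : RespectsCapacities 𝒜 c I) (hIfin : I.Finite) {e : α}
    (he : e ∉ I) (hnot : ¬ RespectsCapacities 𝒜 c (insert e I)) :
    ∃ A ∈ 𝒜, e ∈ A ∧ (I ∩ A).ncard = c A := by
  simp only [RespectsCapacities, not_forall, not_le] at hnot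
  obtain ⟨A, hA, hlt⟩ := hnot
  by_cases heA : e ∈ A
  · rw [insert_inter_of_mem heA, ncard_insert_of_notMem (fun h ↦ he h.1) (hIfin.inter_of_left A)]
      at hlt
    exact ⟨A, hA, heA, le_antisymm (hI A hA) (by omega)⟩
  · rw [insert_inter_of_notMem heA] at hlt
    exact absurd (hI A hA) hlt.not_ge

theorem exists_insert_of_ncard_lt (h𝒜 : IsLaminarFamily 𝒜) (h𝒜fin : 𝒜.Finite)
    (hI : RespectsCapacities 𝒜 c I) (hJ : RespectsCapacities 𝒜 c J) (hIfin : I.Finite)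
    (hJfin : J.Finite) (hlt : I.ncard < J.ncard) :
    ∃ e ∈ J, e ∉ I ∧ RespectsCapacities 𝒜 c (insert e I) := by
  by_contra! hno
  set 𝒯 := {A ∈ 𝒜 | (I ∩ A).ncard = c A}
  have h𝒯fin : 𝒯.Finite := h𝒜fin.subset (sep_subset _ _)
  have hmaxfin : {A | Maximal (· ∈ 𝒯) A}.Finite := h𝒯fin.subset fun A hA ↦ hA.prop
  have hcover : J \ I ⊆ ⋃ A ∈ hmaxfin.toFinset, A := by
    intro e ⟨heJ, heI⟩
    obtain ⟨A, hA, heA, htight⟩ := hI.exists_tight_of_not_insert hIfin heI (hno e heJ heI)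
    obtain ⟨B, hAB, hB⟩ := h𝒯fin.exists_le_maximal (show A ∈ 𝒯 from ⟨hA, htight⟩)
    exact mem_biUnion (hmaxfin.mem_toFinset.mpr hB) (hAB heA)
  refine hlt.not_ge (ncard_le_ncard_of_sdiff_subset_biUnion hIfin hJfin ?_ ?_ hcover)
  · rw [hmaxfin.coe_toFinset]
    exact h𝒜.pairwiseDisjoint_maximal (𝒮 := 𝒯) (sep_subset 𝒜 _)
  · intro A hA
    obtain ⟨hA𝒜, htight⟩ := (hmaxfin.mem_toFinset.mp hA).prop
    exact htight ▸ hJ A hA𝒜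

end RespectsCapacities

theorem stmt_0 (E : Set α) (hE : E.Finite) (𝒜 : Set (Set α)) (h𝒜E : ∀ A ∈ 𝒜, A ⊆ E)
    (h𝒜 : IsLaminarFamily 𝒜) (c : Set α → ℕ) :
    ∃ M : Matroid α, M.IsLaminarPresBy E 𝒜 c := by
  have h𝒜fin : 𝒜.Finite := hE.finite_subsets.subset h𝒜E
  refine ⟨(IndepMatroid.ofFinite hE (fun I ↦ I ⊆ E ∧ RespectsCapacities 𝒜 c I)
    ⟨empty_subset E, fun A _ ↦ by simp⟩
    (fun I J hJ hIJ ↦ ⟨hIJ.trans hJ.1, hJ.2.subset (hE.subset hJ.1) hIJ⟩)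
    (fun I J hI hJ hlt ↦ ?_) (fun I hI ↦ hI.1)).matroid, rfl, fun I ↦ Iff.rfl⟩
  obtain ⟨e, heJ, heI, he⟩ := hI.2.exists_insert_of_ncard_lt h𝒜 h𝒜fin hJ.2
    (hE.subset hI.1) (hE.subset hJ.1) hlt
  exact ⟨e, heJ, heI, insert_subset (hJ.1 heJ) hI.1, he⟩
end

section
/- Let M = M(E, 𝒜, c) be a laminar matroid and A ∈ 𝒜. Let χ(A) be the set of children of A in 𝒜 (maximal proper subsets of A belonging to 𝒜), let S(A) = A − ⋃_{F ∈ χ(A)} F, and let b(A) = |S(A)| + Σ_{F ∈ χ(A)} c(F). If c(A) ≥ b(A), then removing A from 𝒜 does not change the matroid. -/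
open Set

variable {α : Type*}

/-- The children of `A` in `𝒜`: maximal proper subsets of `A` belonging to `𝒜`. -/
def children (𝒜 : Set (Set α)) (A : Set α) : Set (Set α) :=
  {B ∈ 𝒜 | B ⊂ A ∧ ¬ ∃ G ∈ 𝒜, B ⊂ G ∧ G ⊂ A}

/-! The constraint at `A` is implied by those at its children: every element of `I ∩ A` lies
either in `S(A)` or in some child `F`, and `I` meets each child `F` in at most `c F` elements,
so `|I ∩ A| ≤ |S(A)| + Σ c F = b(A) ≤ c A`. -/

theorem Set.ncard_inter_le_ncard_diff_sUnion_add_finsum {I A : Set α} {𝒞 : Set (Set α)}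
    {c : Set α → ℕ} (hI : I.Finite) (hA : A.Finite) (h𝒞 : 𝒞.Finite)
    (hc : ∀ F ∈ 𝒞, (I ∩ F).ncard ≤ c F) :
    (I ∩ A).ncard ≤ (A \ ⋃₀ 𝒞).ncard + ∑ᶠ F ∈ 𝒞, c F := by
  have hcover : I ∩ A ⊆ (A \ ⋃₀ 𝒞) ∪ ⋃ F ∈ 𝒞, I ∩ F := by
    rintro x ⟨hxI, hxA⟩
    by_cases hx : x ∈ ⋃₀ 𝒞
    · obtain ⟨F, hF, hxF⟩ := hx
      exact Or.inr (mem_biUnion hF ⟨hxI, hxF⟩)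
    · exact Or.inl ⟨hxA, hx⟩
  calc (I ∩ A).ncard
      ≤ ((A \ ⋃₀ 𝒞) ∪ ⋃ F ∈ 𝒞, I ∩ F).ncard :=
        ncard_le_ncard hcover (hA.sdiff.union (h𝒞.biUnion fun F _ ↦ hI.inter_of_left F))
    _ ≤ (A \ ⋃₀ 𝒞).ncard + (⋃ F ∈ 𝒞, I ∩ F).ncard := ncard_union_le _ _
    _ ≤ (A \ ⋃₀ 𝒞).ncard + ∑ᶠ F ∈ 𝒞, (I ∩ F).ncard := by
        gcongr; exact h𝒞.ncard_biUnion_le _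
    _ ≤ (A \ ⋃₀ 𝒞).ncard + ∑ᶠ F ∈ 𝒞, c F := by
        gcongr
        simp only [finsum_mem_eq_finite_toFinset_sum _ h𝒞]
        exact Finset.sum_le_sum fun F hF ↦ hc F (h𝒞.mem_toFinset.1 hF)

theorem children_subset (𝒜 : Set (Set α)) (A : Set α) : children 𝒜 A ⊆ 𝒜 :=
  fun _ hB ↦ hB.1

theorem self_notMem_children (𝒜 : Set (Set α)) (A : Set α) : A ∉ children 𝒜 A :=
  fun hA ↦ hA.2.1.ne rfl

theorem stmt_3_general (E : Set α) (hE : E.Finite) (𝒜 : Set (Set α)) (h𝒜E : ∀ A ∈ 𝒜, A ⊆ E)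
    (c : Set α → ℕ) (A : Set α)
    (hb : (A \ ⋃₀ children 𝒜 A).ncard + ∑ᶠ F ∈ children 𝒜 A, c F ≤ c A)
    (M M' : Matroid α) (hM : M.IsLaminarPresBy E 𝒜 c)
    (hM' : M'.IsLaminarPresBy E (𝒜 \ {A}) c) : M' = M := by
  refine Matroid.ext_indep (hM'.1.trans hM.1.symm) fun I _ ↦ ?_
  rw [hM.2, hM'.2]
  refine ⟨fun ⟨hIE, hI⟩ ↦ ⟨hIE, fun B hB ↦ ?_⟩, fun ⟨hIE, hI⟩ ↦ ⟨hIE, fun B hB ↦ hI B hB.1⟩⟩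
  obtain rfl | hBA := eq_or_ne B A
  · have hχ : (children 𝒜 B).Finite :=
      hE.finite_subsets.subset fun F hF ↦ h𝒜E F (children_subset 𝒜 B hF)
    refine (ncard_inter_le_ncard_diff_sUnion_add_finsum (hE.subset hIE)
      (hE.subset (h𝒜E B hB)) hχ fun F hF ↦ hI F ⟨children_subset 𝒜 B hF, ?_⟩).trans hb
    exact ne_of_mem_of_not_mem hF (self_notMem_children 𝒜 B)
  · exact hI B ⟨hB, hBA⟩

theorem stmt_3 (E : Set α) (hE : E.Finite) (𝒜 : Set (Set α)) (h𝒜E : ∀ A ∈ 𝒜, A ⊆ E)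
    (h𝒜 : IsLaminarFamily 𝒜) (c : Set α → ℕ) (A : Set α) (hA : A ∈ 𝒜)
    (hb : (A \ ⋃₀ children 𝒜 A).ncard + ∑ᶠ F ∈ children 𝒜 A, c F ≤ c A)
    (M M' : Matroid α) (hM : M.IsLaminarPresBy E 𝒜 c)
    (hM' : M'.IsLaminarPresBy E (𝒜 \ {A}) c) : M' = M :=
  stmt_3_general E hE 𝒜 h𝒜E c A hb M M' hM hM'
end

section
/- Let M be a loopless laminar matroid with canonical presentation (E, 𝒜, c), and let C be a circuit of M with |C| ≥ 2. Then cl(C) ∈ 𝒜 and c(cl(C)) = |C| − 1. -/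
open Set

variable {α : Type*}

/-- `A` is essential in the presentation `(E, 𝒜, c)`: removing it changes the matroid. -/
def Essential (E : Set α) (𝒜 : Set (Set α)) (c : Set α → ℕ) (A : Set α) : Prop :=
  ∃ I ⊆ E, (∀ B ∈ 𝒜, B ≠ A → (I ∩ B).ncard ≤ c B) ∧ c A < (I ∩ A).ncard

/-- A canonical presentation of a loopless laminar matroid: every member is essential. -/
def IsCanonical (E : Set α) (𝒜 : Set (Set α)) (c : Set α → ℕ) : Prop :=
  ∀ A ∈ 𝒜, Essential E 𝒜 c A

/-- A matroid is loopless if every singleton of the ground set is independent. -/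
def Matroid.Loopless' (M : Matroid α) : Prop := ∀ e ∈ M.E, M.Indep {e}

/-- Connectivity: every pair of distinct elements lies in a common circuit. -/
def Matroid.IsConnected' (M : Matroid α) : Prop :=
  ∀ e ∈ M.E, ∀ f ∈ M.E, e ≠ f → ∃ C, M.IsCircuit' C ∧ e ∈ C ∧ f ∈ C

/-!
Pick a member `A ∈ 𝒜` whose capacity `C` violates. Every proper subset of `C` is independent, so
`C ⊆ A` and `c(A) = |C| - 1`; thus `B = C \ {f}` is an independent subset of `A` of size `c(A)`,
and `cl(C) = cl(B)`. Such a `B` spans `A`, because adding any `e ∈ A` overfills `A`. Conversely, an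
element `e ∈ cl(B) \ A` would lie in a member `A'` that is tight for `B`; by looplessness `c(A') ≥ 1`,
so `A'` meets `B ⊆ A`, and by laminarity `A ⊊ A'`. But in a canonical presentation capacities
strictly increase along strict inclusions, so `c(A) < c(A') = |B ∩ A'| ≤ |B| = c(A)`.
-/

lemma Matroid.IsCircuit'.isCircuit {M : Matroid α} {C : Set α} (hC : M.IsCircuit' C) :
    M.IsCircuit C :=
  Matroid.isCircuit_iff_forall_ssubset.2 ⟨hC.1, fun I hI => hC.2 I hI⟩

lemma Essential.capacity_lt {E : Set α} {𝒜 : Set (Set α)} {c : Set α → ℕ} {A A' : Set α}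
    (hA : Essential E 𝒜 c A) (hE : E.Finite) (hA' : A' ∈ 𝒜) (hAA' : A ⊆ A') (hne : A' ≠ A) :
    c A < c A' := by
  obtain ⟨I, hIE, hI𝒜, hIA⟩ := hA
  have hIA' : (I ∩ A).ncard ≤ (I ∩ A').ncard :=
    ncard_le_ncard (inter_subset_inter_right _ hAA') (hE.subset (inter_subset_left.trans hIE))
  have := hI𝒜 A' hA' hne
  omega

namespace Matroid.IsLaminarPresBy

variable {M : Matroid α} {E : Set α} {𝒜 : Set (Set α)} {c : Set α → ℕ} {A I X : Set α} {e : α}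

lemma ncard_inter_le (hM : M.IsLaminarPresBy E 𝒜 c) (hI : M.Indep I) (hA : A ∈ 𝒜) :
    (I ∩ A).ncard ≤ c A :=
  ((hM.2 I).1 hI).2 A hA

lemma exists_capacity_lt_of_not_indep (hM : M.IsLaminarPresBy E 𝒜 c) (hX : X ⊆ E)
    (hXI : ¬ M.Indep X) : ∃ A ∈ 𝒜, c A < (X ∩ A).ncard := by
  simpa [hM.2, hX] using hXI

lemma one_le_capacity (hM : M.IsLaminarPresBy E 𝒜 c) (hloop : M.Loopless') (hA : A ∈ 𝒜)
    (heA : e ∈ A) (he : e ∈ E) : 1 ≤ c A := by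
  have := hM.ncard_inter_le (hloop e (hM.1 ▸ he)) hA
  rwa [inter_eq_left.2 (singleton_subset_iff.2 heA), ncard_singleton] at this

lemma exists_tight_of_insert_dep (hM : M.IsLaminarPresBy E 𝒜 c) (hI : M.Indep I)
    (hIfin : I.Finite) (heI : e ∉ I) (hdep : M.Dep (insert e I)) :
    ∃ A ∈ 𝒜, e ∈ A ∧ (I ∩ A).ncard = c A := by
  obtain ⟨A, hA, hlt⟩ :=
    hM.exists_capacity_lt_of_not_indep (hM.1 ▸ hdep.subset_ground) hdep.not_indep
  have hle := hM.ncard_inter_le hI hA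
  have heA : e ∈ A := by
    by_contra heA
    rw [insert_inter_of_notMem heA] at hlt
    omega
  rw [insert_inter_of_mem heA,
    ncard_insert_of_notMem (fun h => heI h.1) (hIfin.subset inter_subset_left)] at hlt
  exact ⟨A, hA, heA, by omega⟩

lemma subset_closure_of_ncard_inter_eq (hM : M.IsLaminarPresBy E 𝒜 c) (hI : M.Indep I)
    (hIfin : I.Finite) (hA : A ∈ 𝒜) (hAE : A ⊆ E) (htight : (I ∩ A).ncard = c A) :
    A ⊆ M.closure I := by
  intro e heA
  by_cases heI : e ∈ I
  · exact M.subset_closure I hI.subset_ground heI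
  rw [hI.mem_closure_iff_of_notMem heI]
  refine ⟨fun hins => ?_, insert_subset (hM.1 ▸ hAE heA) hI.subset_ground⟩
  have := hM.ncard_inter_le hins hA
  rw [insert_inter_of_mem heA,
    ncard_insert_of_notMem (fun h => heI h.1) (hIfin.subset inter_subset_left)] at this
  omega

lemma closure_subset_of_ncard_eq (hM : M.IsLaminarPresBy E 𝒜 c) (hE : E.Finite)
    (h𝒜 : IsLaminarFamily 𝒜) (hcanon : IsCanonical E 𝒜 c) (hloop : M.Loopless')
    (hI : M.Indep I) (hA : A ∈ 𝒜) (hIA : I ⊆ A) (hcard : I.ncard = c A) :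
    M.closure I ⊆ A := by
  intro e he
  by_contra heA
  have hIfin : I.Finite := hE.subset (hM.1 ▸ hI.subset_ground)
  have heI : e ∉ I := fun h => heA (hIA h)
  obtain ⟨A', hA', heA', htight⟩ :=
    hM.exists_tight_of_insert_dep hI hIfin heI ((hI.mem_closure_iff_of_notMem heI).1 he)
  have hpos := hM.one_le_capacity hloop hA' heA' (hM.1 ▸ M.closure_subset_ground I he)
  have hmeet : (A ∩ A').Nonempty :=
    (nonempty_of_ncard_ne_zero (by omega)).mono (inter_subset_inter_left A' hIA)
  rcases h𝒜 A hA A' hA' hmeet with hAA' | hA'A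
  · have hlt := (hcanon A hA).capacity_lt hE hA' hAA' (by rintro rfl; exact heA heA')
    have := ncard_le_ncard (inter_subset_left : I ∩ A' ⊆ I) hIfin
    omega
  · exact heA (hA'A heA')

lemma subset_of_isCircuit (hM : M.IsLaminarPresBy E 𝒜 c) {C : Set α} (hC : M.IsCircuit C)
    (hA : A ∈ 𝒜) (hlt : c A < (C ∩ A).ncard) : C ⊆ A := by
  by_contra hCA
  obtain ⟨f, hfC, hfA⟩ := not_subset.1 hCA
  have := hM.ncard_inter_le (hC.ssubset_indep ⟨inter_subset_left, fun h => hfA (h hfC).2⟩) hA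
  rw [inter_assoc, inter_self] at this
  omega

end Matroid.IsLaminarPresBy

theorem stmt_4_general (E : Set α) (hE : E.Finite) (𝒜 : Set (Set α)) (h𝒜E : ∀ A ∈ 𝒜, A ⊆ E)
    (h𝒜 : IsLaminarFamily 𝒜) (c : Set α → ℕ)
    (M : Matroid α) (hM : M.IsLaminarPresBy E 𝒜 c)
    (hcanon : IsCanonical E 𝒜 c) (hloop : M.Loopless')
    (C : Set α) (hC : M.IsCircuit' C) :
    M.closure C ∈ 𝒜 ∧ c (M.closure C) = C.ncard - 1 := by
  have hC := hC.isCircuit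
  obtain ⟨A, hA, hlt⟩ :=
    hM.exists_capacity_lt_of_not_indep (hM.1 ▸ hC.subset_ground) hC.not_indep
  have hCA := hM.subset_of_isCircuit hC hA hlt
  rw [inter_eq_left.2 hCA] at hlt
  obtain ⟨f, hf⟩ := nonempty_of_ncard_ne_zero (by omega : C.ncard ≠ 0)
  set B := C \ {f}
  have hB : M.Indep B := hC.sdiff_singleton_indep hf
  have hBA : B ⊆ A := sdiff_subset.trans hCA
  have hBcard : B.ncard = C.ncard - 1 := ncard_sdiff_singleton_of_mem hf
  have hcap : c A = C.ncard - 1 := by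
    have := hM.ncard_inter_le hB hA
    rw [inter_eq_left.2 hBA] at this
    omega
  have hBfin : B.Finite := hE.subset (hM.1 ▸ hB.subset_ground)
  have hcl : M.closure C = A := by
    rw [← hC.closure_sdiff_singleton_eq f]
    refine (hM.closure_subset_of_ncard_eq hE h𝒜 hcanon hloop hB hA hBA (by omega)).antisymm ?_
    exact hM.subset_closure_of_ncard_inter_eq hB hBfin hA (h𝒜E A hA)
      (by rw [inter_eq_left.2 hBA]; omega)
  exact ⟨hcl ▸ hA, by rw [hcl, hcap]⟩

theorem stmt_4 (E : Set α) (hE : E.Finite) (𝒜 : Set (Set α)) (h𝒜E : ∀ A ∈ 𝒜, A ⊆ E)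
    (h𝒜 : IsLaminarFamily 𝒜) (c : Set α → ℕ)
    (M : Matroid α) (hM : M.IsLaminarPresBy E 𝒜 c)
    (hcanon : IsCanonical E 𝒜 c) (hloop : M.Loopless')
    (C : Set α) (hC : M.IsCircuit' C) (hC2 : 2 ≤ C.ncard) :
    M.closure C ∈ 𝒜 ∧ c (M.closure C) = C.ncard - 1 :=
  stmt_4_general E hE 𝒜 h𝒜E h𝒜 c M hM hcanon hloop C hC
end

section
/- If a matroid N has two circuits C and D with C ∩ D ≠ ∅ such that cl(C) ⊄ cl(D) and cl(D) ⊄ cl(C), then N is not a laminar matroid. -/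
open Set

variable {α : Type*}

/-!
A circuit `K` of a laminar matroid overflows some member `A` of the family, `c A < |K ∩ A|`;
then `K ⊆ A`, since removing an element outside `A` from `K` would not cure the overflow.
Any `x ∈ A` added to `K` minus one element again overflows `A`, so `A ∩ E ⊆ cl K`. For intersecting
circuits `C ⊆ A` and `D ⊆ B`, laminarity makes `A` and `B` comparable, say `A ⊆ B`, and then
`C ⊆ B ∩ E ⊆ cl D`.
-/

namespace Matroid.IsLaminarPresBy

variable {M : Matroid α} {E : Set α} {𝒜 : Set (Set α)} {c : Set α → ℕ} {K A : Set α}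

theorem exists_mem_subset_lt_ncard (h : M.IsLaminarPresBy E 𝒜 c) (hK : M.IsCircuit' K) :
    ∃ A ∈ 𝒜, K ⊆ A ∧ c A < K.ncard := by
  obtain ⟨rfl, hindep⟩ := h
  obtain ⟨hKdep, hKmin⟩ := hK
  obtain ⟨A, hA, hcA⟩ : ∃ A ∈ 𝒜, c A < (K ∩ A).ncard := by
    simpa [hindep K, hKdep.subset_ground] using hKdep.not_indep
  have hKA : K ⊆ A := by
    by_contra hKA
    obtain ⟨x, hxK, hxA⟩ := not_subset.mp hKA
    have hdel : (K \ {x}) ∩ A = K ∩ A := by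
      rw [← inter_sdiff_right_comm, sdiff_singleton_eq_self fun hx ↦ hxA hx.2]
    have := ((hindep _).1 (hKmin _ (sdiff_singleton_ssubset.mpr hxK))).2 A hA
    rw [hdel] at this
    omega
  exact ⟨A, hA, hKA, by rwa [inter_eq_left.mpr hKA] at hcA⟩

theorem inter_subset_closure (h : M.IsLaminarPresBy E 𝒜 c) (hK : M.IsCircuit' K) (hA : A ∈ 𝒜)
    (hKA : K ⊆ A) (hcA : c A < K.ncard) : A ∩ E ⊆ M.closure K := by
  obtain ⟨rfl, hindep⟩ := h
  rintro x ⟨hxA, hxE⟩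
  have hKE : K ⊆ M.E := hK.1.subset_ground
  by_cases hxK : x ∈ K
  · exact M.subset_closure K hKE hxK
  obtain ⟨d, hd⟩ := nonempty_of_ncard_ne_zero (by omega : K.ncard ≠ 0)
  have hKfin : K.Finite := finite_of_ncard_pos (by omega)
  have hI : M.Indep (K \ {d}) := hK.2 _ (sdiff_singleton_ssubset.mpr hd)
  have hxI : x ∉ K \ {d} := fun hx ↦ hxK hx.1
  have hsA : insert x (K \ {d}) ⊆ A := insert_subset hxA (sdiff_subset.trans hKA)
  have hcard : (insert x (K \ {d})).ncard = K.ncard := by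
    rw [ncard_insert_of_notMem hxI (hKfin.sdiff), ncard_sdiff_singleton_of_mem hd]
    omega
  have hdep : M.Dep (insert x (K \ {d})) := by
    refine ⟨fun hind ↦ ?_, insert_subset hxE (sdiff_subset.trans hKE)⟩
    have := ((hindep _).1 hind).2 A hA
    rw [inter_eq_left.mpr hsA, hcard] at this
    omega
  exact M.closure_subset_closure sdiff_subset ((hI.mem_closure_iff_of_notMem hxI).mpr hdep)

end Matroid.IsLaminarPresBy

theorem stmt_5_general (N : Matroid α) (C D : Set α)
    (hC : N.IsCircuit' C) (hD : N.IsCircuit' D) (hCD : (C ∩ D).Nonempty)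
    (h1 : ¬ N.closure C ⊆ N.closure D) (h2 : ¬ N.closure D ⊆ N.closure C) :
    ¬ N.HasLaminarPres := by
  rintro ⟨𝒜, c, hlam, -, hpres⟩
  obtain ⟨A, hA, hCA, hcC⟩ := hpres.exists_mem_subset_lt_ncard hC
  obtain ⟨B, hB, hDB, hcD⟩ := hpres.exists_mem_subset_lt_ncard hD
  have hCE : C ⊆ N.E := hC.1.subset_ground
  have hDE : D ⊆ N.E := hD.1.subset_ground
  obtain ⟨y, hyC, hyD⟩ := hCD
  rcases hlam A hA B hB ⟨y, hCA hyC, hDB hyD⟩ with hAB | hBA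
  · exact h1 <| Matroid.closure_subset_closure_of_subset_closure <|
      (subset_inter (hCA.trans hAB) hCE).trans (hpres.inter_subset_closure hD hB hDB hcD)
  · exact h2 <| Matroid.closure_subset_closure_of_subset_closure <|
      (subset_inter (hDB.trans hBA) hDE).trans (hpres.inter_subset_closure hC hA hCA hcC)

theorem stmt_5 (N : Matroid α) (hfin : N.E.Finite) (C D : Set α)
    (hC : N.IsCircuit' C) (hD : N.IsCircuit' D) (hCD : (C ∩ D).Nonempty)
    (h1 : ¬ N.closure C ⊆ N.closure D) (h2 : ¬ N.closure D ⊆ N.closure C) :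
    ¬ N.HasLaminarPres :=
  stmt_5_general N C D hC hD hCD h1 h2
end

section
/- A matroid M is laminar if and only if for all circuits C₁ and C₂ of M with C₁ ∩ C₂ ≠ ∅, either cl(C₁) ⊆ cl(C₂) or cl(C₂) ⊆ cl(C₁). -/
/-!
If `M = M(E, 𝒜, c)`, a circuit `C` violates some constraint `A ∈ 𝒜`; minimality of `C` forces
`C ⊆ A`, and then `A ⊆ cl C`, since otherwise some `a ∈ A \ cl C` together with `C - e` would be
an independent set of size `|C|` in `A`. So `cl C = cl A`, and the laminarity of `𝒜` passes to the
closures of circuits.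

Conversely, if intersecting circuits have nested closures, strong circuit elimination shows that
every non-loop `x ∈ cl C` lies on a circuit whose closure is `cl C`. Hence the sets `cl C` with the
loops removed, together with the set of loops, form a laminar family. With the rank function as
capacities it presents `M`, because every circuit `C` lies in one of its members, of rank `< |C|`.
-/

open Set

variable {α : Type*}

namespace Matroid

variable {M : Matroid α} {C C₁ C₂ X Y : Set α} {x : α}

lemma isCircuit'_iff : M.IsCircuit' C ↔ M.IsCircuit C :=
  isCircuit_iff_forall_ssubset.symm

lemma IsLaminar.closure_subset_or_closure_subset (hM : M.IsLaminar) (hC₁ : M.IsCircuit C₁)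
    (hC₂ : M.IsCircuit C₂) (hC₁₂ : (C₁ ∩ C₂).Nonempty) :
    M.closure C₁ ⊆ M.closure C₂ ∨ M.closure C₂ ⊆ M.closure C₁ :=
  hM C₁ C₂ (isCircuit'_iff.2 hC₁) (isCircuit'_iff.2 hC₂) hC₁₂

lemma closure_eq_closure_of_subset_closure (hXY : X ⊆ M.closure Y) (hYX : Y ⊆ M.closure X) :
    M.closure X = M.closure Y :=
  (M.closure_subset_closure_of_subset_closure hXY).antisymm
    (M.closure_subset_closure_of_subset_closure hYX)

section Presentation

variable {𝒜 : Set (Set α)} {c : Set α → ℕ}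

lemma IsLaminarPresBy.exists_mem_subset_subset_closure [M.Finite]
    (hM : M.IsLaminarPresBy M.E 𝒜 c) (h𝒜 : ∀ A ∈ 𝒜, A ⊆ M.E) (hC : M.IsCircuit C) :
    ∃ A ∈ 𝒜, C ⊆ A ∧ A ⊆ M.closure C := by
  have hCfin := M.set_finite C hC.subset_ground
  obtain ⟨A, hA, hcA⟩ : ∃ A ∈ 𝒜, c A < (C ∩ A).ncard := by
    by_contra! h
    exact hC.not_indep ((hM.2 C).2 ⟨hC.subset_ground, h⟩)
  have hCA : C ⊆ A := by
    by_contra hCA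
    have hind := hC.ssubset_indep (inter_subset_left.ssubset_of_ne
      fun h ↦ hCA (h ▸ inter_subset_right))
    have := ((hM.2 _).1 hind).2 A hA
    rw [inter_assoc, inter_self] at this
    omega
  rw [inter_eq_self_of_subset_left hCA] at hcA
  refine ⟨A, hA, hCA, fun a haA ↦ by_contra fun hacl ↦ ?_⟩
  obtain ⟨e, he⟩ := hC.nonempty
  have haC : a ∉ C \ {e} := fun h ↦ hacl (M.mem_closure_of_mem h.1 hC.subset_ground)
  have hind : M.Indep (insert a (C \ {e})) := by
    rw [(hC.sdiff_singleton_indep he).insert_indep_iff_of_notMem haC,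
      hC.closure_sdiff_singleton_eq]
    exact ⟨h𝒜 A hA haA, hacl⟩
  have hbound := ((hM.2 _).1 hind).2 A hA
  rw [inter_eq_self_of_subset_left (insert_subset haA (sdiff_subset.trans hCA)),
    ncard_insert_of_notMem haC hCfin.sdiff, ncard_sdiff_singleton_add_one he hCfin] at hbound
  omega

lemma HasLaminarPres.isLaminar [M.Finite] (hM : M.HasLaminarPres) : M.IsLaminar := by
  obtain ⟨𝒜, c, h𝒜, h𝒜E, hpres⟩ := hM
  intro C₁ C₂ hC₁ hC₂ ⟨y, hy₁, hy₂⟩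
  obtain ⟨A₁, hA₁, hCA₁, hAC₁⟩ :=
    hpres.exists_mem_subset_subset_closure h𝒜E (isCircuit'_iff.1 hC₁)
  obtain ⟨A₂, hA₂, hCA₂, hAC₂⟩ :=
    hpres.exists_mem_subset_subset_closure h𝒜E (isCircuit'_iff.1 hC₂)
  rw [← closure_eq_closure_of_subset_closure hAC₁ (M.subset_closure_of_subset' hCA₁),
    ← closure_eq_closure_of_subset_closure hAC₂ (M.subset_closure_of_subset' hCA₂)]
  exact (h𝒜 A₁ hA₁ A₂ hA₂ ⟨y, hCA₁ hy₁, hCA₂ hy₂⟩).imp (M.closure_subset_closure ·)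
    (M.closure_subset_closure ·)

lemma isLaminarPresBy_eRk [M.Finite]
    (h𝒜 : ∀ C, M.IsCircuit C → ∃ A ∈ 𝒜, C ⊆ A ∧ M.eRk A < C.encard) :
    M.IsLaminarPresBy M.E 𝒜 (fun A ↦ (M.eRk A).toNat) := by
  refine ⟨rfl, fun I ↦ ?_⟩
  have hcap : ∀ A, I ⊆ M.E →
      ((I ∩ A).ncard ≤ (M.eRk A).toNat ↔ (I ∩ A).encard ≤ M.eRk A) := by
    intro A hI
    rw [← Nat.cast_le (α := ℕ∞), (M.set_finite _ (inter_subset_left.trans hI)).cast_ncard_eq,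
      ENat.natCast_toNat (M.isRkFinite_set A).eRk_lt_top.ne]
  constructor
  · intro hI
    refine ⟨hI.subset_ground, fun A _ ↦ (hcap A hI.subset_ground).2 ?_⟩
    exact (hI.subset inter_subset_left).encard_le_eRk_of_subset inter_subset_right
  · rintro ⟨hIE, hIcap⟩
    by_contra hI
    obtain ⟨C, hCI, hC⟩ := (show M.Dep I from ⟨hI, hIE⟩).exists_isCircuit_subset
    obtain ⟨A, hA, hCA, hAC⟩ := h𝒜 C hC
    exact (((hcap A hIE).1 (hIcap A hA)).trans_lt hAC).not_ge
      (encard_le_encard (subset_inter hCI hCA))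

end Presentation

section Laminar

variable {C' : Set α} {f : α}

lemma IsCircuit.exists_isCircuit_subset_insert_mem_mem (hC : M.IsCircuit C)
    (hC' : M.IsCircuit C') (hC'C : C' ⊆ insert x C) (hxC' : x ∈ C') (hx : M.IsNonloop x)
    (hf : f ∈ C) : ∃ D ⊆ insert x C, M.IsCircuit D ∧ x ∈ D ∧ f ∈ D := by
  by_cases hfC' : f ∈ C'
  · exact ⟨C', hC'C, hC', hxC', hfC'⟩
  obtain ⟨g, hgC', hgx⟩ : (C' \ {x}).Nonempty := by
    by_contra! h
    have hC'x : C' = {x} := (sdiff_eq_empty.1 h).antisymm (singleton_subset_iff.2 hxC')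
    exact hx.not_isLoop (singleton_isCircuit.1 (hC'x ▸ hC'))
  have hgC : g ∈ C := (hC'C hgC').resolve_left hgx
  obtain ⟨D, hDsub, hD, hfD⟩ := hC.strong_elimination hC' hgC hgC' hf hfC'
  have hDC : D ⊆ insert x C :=
    hDsub.trans (sdiff_subset.trans (union_subset (subset_insert x C) hC'C))
  refine ⟨D, hDC, hD, by_contra fun hxD ↦ ?_, hfD⟩
  refine hD.not_indep ((hC.sdiff_singleton_indep hgC).subset fun z hz ↦ ?_)
  exact ⟨(hDC hz).resolve_left (ne_of_mem_of_not_mem hz hxD), (hDsub hz).2⟩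

/-- Among the circuits through `x` inside `insert x C`, whose closures form a chain, one with
largest closure spans `C`. -/
lemma IsLaminar.exists_isCircuit_mem_closure_eq [M.Finite] (hM : M.IsLaminar)
    (hC : M.IsCircuit C) (hxC : x ∈ M.closure C) (hx : M.IsNonloop x) :
    ∃ C', M.IsCircuit C' ∧ x ∈ C' ∧ M.closure C' = M.closure C := by
  set S := {D | D ⊆ insert x C ∧ M.IsCircuit D ∧ x ∈ D}
  have hSfin : S.Finite :=
    (M.set_finite (insert x C) (insert_subset hx.mem_ground hC.subset_ground)).finite_subsets
      |>.subset fun D hD ↦ hD.1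
  have hSne : S.Nonempty := by
    obtain ⟨D, hDsub, hD, hxD⟩ := exists_isCircuit_of_mem_closure (X := C \ {x})
      (by rwa [hC.closure_sdiff_singleton_eq]) (fun h ↦ h.2 rfl)
    exact ⟨D, hDsub.trans (insert_subset_insert sdiff_subset), hD, hxD⟩
  obtain ⟨C', ⟨hC'C, hC', hxC'⟩, hmax⟩ := hSfin.exists_maximalFor M.closure S hSne
  refine ⟨C', hC', hxC', closure_eq_closure_of_subset_closure
    (hC'C.trans (insert_subset hxC (M.subset_closure C))) fun f hf ↦ ?_⟩
  obtain ⟨D, hDC, hD, hxD, hfD⟩ := hC.exists_isCircuit_subset_insert_mem_mem hC' hC'C hxC' hx hf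
  have hDC' : M.closure D ⊆ M.closure C' :=
    (hM.closure_subset_or_closure_subset hC' hD ⟨x, hxC', hxD⟩).elim (hmax ⟨hDC, hD, hxD⟩) id
  exact hDC' (M.mem_closure_of_mem hfD)

/-- Loops are removed from the closures because they lie in every closure. -/
def circuitClosureFamily (M : Matroid α) : Set (Set α) :=
  insert M.loops {A | ∃ C, M.IsCircuit C ∧ A = M.closure C \ M.loops}

lemma subset_ground_of_mem_circuitClosureFamily {A : Set α} (hA : A ∈ M.circuitClosureFamily) :
    A ⊆ M.E := by
  obtain rfl | ⟨C, -, rfl⟩ := hA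
  · exact M.loops_subset_ground
  · exact sdiff_subset.trans (M.closure_subset_ground C)

lemma IsLaminar.isLaminarFamily_circuitClosureFamily [M.Finite] (hM : M.IsLaminar) :
    IsLaminarFamily M.circuitClosureFamily := by
  rintro A (rfl | ⟨C₁, hC₁, rfl⟩) B (rfl | ⟨C₂, hC₂, rfl⟩) ⟨z, hzA, hzB⟩
  · exact Or.inl subset_rfl
  · exact absurd hzA hzB.2
  · exact absurd hzB hzA.2
  have hz : M.IsNonloop z := isNonloop_of_notMem_closure hzA.2
  obtain ⟨C₁', hC₁', hzC₁', hcl₁⟩ := hM.exists_isCircuit_mem_closure_eq hC₁ hzA.1 hz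
  obtain ⟨C₂', hC₂', hzC₂', hcl₂⟩ := hM.exists_isCircuit_mem_closure_eq hC₂ hzB.1 hz
  rw [← hcl₁, ← hcl₂]
  exact (hM.closure_subset_or_closure_subset hC₁' hC₂' ⟨z, hzC₁', hzC₂'⟩).imp
    (sdiff_subset_sdiff_left ·) (sdiff_subset_sdiff_left ·)

lemma IsCircuit.exists_mem_circuitClosureFamily_eRk_lt [M.Finite] (hC : M.IsCircuit C) :
    ∃ A ∈ M.circuitClosureFamily, C ⊆ A ∧ M.eRk A < C.encard := by
  by_cases hCL : ∃ e ∈ C, M.IsLoop e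
  · obtain ⟨e, heC, he⟩ := hCL
    rw [he.eq_of_isCircuit_mem hC heC]
    exact ⟨M.loops, mem_insert _ _, singleton_subset_iff.2 he, by simp [eRk_loops]⟩
  push Not at hCL
  refine ⟨M.closure C \ M.loops, Or.inr ⟨C, hC, rfl⟩,
    fun e he ↦ ⟨M.mem_closure_of_mem he, hCL e he⟩, ?_⟩
  calc M.eRk (M.closure C \ M.loops) ≤ M.eRk (M.closure C) := M.eRk_mono sdiff_subset
    _ = M.eRk C := M.eRk_closure_eq C
    _ < C.encard := eRk_lt_encard_of_dep_of_finite (M.set_finite C hC.subset_ground) hC.dep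

lemma IsLaminar.hasLaminarPres [M.Finite] (hM : M.IsLaminar) : M.HasLaminarPres :=
  ⟨_, _, hM.isLaminarFamily_circuitClosureFamily,
    fun _ ↦ subset_ground_of_mem_circuitClosureFamily,
    isLaminarPresBy_eRk fun _ ↦ IsCircuit.exists_mem_circuitClosureFamily_eRk_lt⟩

end Laminar

end Matroid

theorem stmt_6 (M : Matroid α) (hfin : M.E.Finite) :
    M.HasLaminarPres ↔ M.IsLaminar := by
  have : M.Finite := ⟨hfin⟩
  exact ⟨Matroid.HasLaminarPres.isLaminar, Matroid.IsLaminar.hasLaminarPres⟩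
end

section
/- Every matroid of rank at most two is laminar. -/
open Set

variable {α : Type*}

/-!
Although `ncard` is `0` on infinite sets, the bound on independent sets still excludes infinite
ones (they would contain three elements), so the matroid has finite rank and finite circuits.
A circuit `C` with at most two elements is spanned by any of its elements `e`, so
`cl C ⊆ cl {e} ⊆ cl C'` for every circuit `C'` through `e`. A circuit with three or more elements
contains the independent set `C \ {f}` of the maximal size two, which is then a basis, so `C` is
spanning and its closure contains every other closure.
-/

namespace Matroid

variable {M : Matroid α} {C I : Set α} {e : α} {k : ℕ}

lemma IsCircuit'.isCircuit_s8 (hC : M.IsCircuit' C) : M.IsCircuit C :=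
  isCircuit_iff.2 ⟨hC.1, fun D hD hDC ↦
    by_contra fun hne ↦ hD.not_indep (hC.2 D (hDC.ssubset_of_ne hne))⟩

lemma Indep.finite_of_forall_ncard_le (hrk : ∀ J, M.Indep J → J.ncard ≤ k) (hI : M.Indep I) :
    I.Finite := by
  by_contra hinf
  obtain ⟨J, hJI, hJ⟩ := Set.Infinite.exists_subset_ncard_eq hinf (k + 1)
  have := hrk J (hI.subset hJI)
  omega

lemma rankFinite_of_forall_ncard_le (hrk : ∀ I, M.Indep I → I.ncard ≤ k) : M.RankFinite :=
  let ⟨_, hB⟩ := M.exists_isBase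
  hB.rankFinite_of_finite (hB.indep.finite_of_forall_ncard_le hrk)

lemma Indep.isBase_of_forall_ncard_le (hI : M.Indep I)
    (hrk : ∀ J, M.Indep J → J.ncard ≤ I.ncard) : M.IsBase I :=
  hI.isBase_of_forall_insert fun x hx hind ↦ by
    have := hrk _ hind
    rw [ncard_insert_of_notMem hx.2 (hI.finite_of_forall_ncard_le hrk)] at this
    omega

lemma IsCircuit.closure_eq_ground_of_forall_ncard_le (hrk : ∀ I, M.Indep I → I.ncard ≤ k)
    (hC : M.IsCircuit C) (hk : k < C.ncard) : M.closure C = M.E := by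
  have := M.rankFinite_of_forall_ncard_le hrk
  obtain ⟨f, hf⟩ := nonempty_of_ncard_ne_zero (s := C) (by omega)
  have hcard : (C \ {f}).ncard + 1 = C.ncard := ncard_sdiff_singleton_add_one hf hC.finite
  have hbase : M.IsBase (C \ {f}) := (hC.sdiff_singleton_indep hf).isBase_of_forall_ncard_le
    fun J hJ ↦ (hrk J hJ).trans (by omega)
  rw [← hC.closure_sdiff_singleton_eq f, hbase.closure_eq]

lemma IsCircuit.closure_subset_closure_singleton [M.Finitary] (hC : M.IsCircuit C) (he : e ∈ C)
    (hC2 : C.ncard ≤ 2) : M.closure C ⊆ M.closure {e} := by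
  refine M.closure_subset_closure_of_subset_closure fun f hf ↦ ?_
  obtain rfl | hfe := eq_or_ne f e
  · exact M.mem_closure_of_mem' rfl (hC.subset_ground hf)
  have hcard : (C \ {f}).ncard + 1 = C.ncard := ncard_sdiff_singleton_add_one hf hC.finite
  have hCf : {e} = C \ {f} := eq_of_subset_of_ncard_le
    (singleton_subset_iff.2 ⟨he, hfe.symm⟩) (by rw [ncard_singleton]; omega) hC.finite.sdiff
  exact hCf ▸ hC.mem_closure_sdiff_singleton_of_mem hf

end Matroid

theorem stmt_8_general (M : Matroid α)
    (hrk : ∀ I, M.Indep I → I.ncard ≤ 2) : M.IsLaminar := by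
  have := M.rankFinite_of_forall_ncard_le hrk
  have small {C D : Set α} {e : α} (hC : M.IsCircuit C) (hD : M.IsCircuit D) (heC : e ∈ C)
      (heD : e ∈ D) (hC2 : C.ncard ≤ 2) : M.closure C ⊆ M.closure D :=
    (hC.closure_subset_closure_singleton heC hC2).trans
      (M.closure_subset_closure (singleton_subset_iff.2 heD))
  rintro C₁ C₂ h₁ h₂ ⟨e, he₁, he₂⟩
  replace h₁ := h₁.isCircuit_s8
  replace h₂ := h₂.isCircuit_s8
  by_cases hn₁ : C₁.ncard ≤ 2
  · exact Or.inl (small h₁ h₂ he₁ he₂ hn₁)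
  by_cases hn₂ : C₂.ncard ≤ 2
  · exact Or.inr (small h₂ h₁ he₂ he₁ hn₂)
  rw [h₂.closure_eq_ground_of_forall_ncard_le hrk (by omega)]
  exact Or.inl (M.closure_subset_ground C₁)

theorem stmt_8 (M : Matroid α) (hfin : M.E.Finite)
    (hrk : ∀ I, M.Indep I → I.ncard ≤ 2) : M.IsLaminar :=
  stmt_8_general M hrk
end

section
/- A matroid is laminar if and only if it has no minor isomorphic to Y_r for any r ≥ 3, where Y_r is the truncation to rank r of the parallel connection of two r-element circuits. -/
open Set Matroid

variable {α : Type*}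

/-- Deletion of a set of elements. -/
def Matroid.del (M : Matroid α) (X : Set α) : Matroid α := M ↾ (M.E \ X)

/-- Contraction of a set of elements, defined via duality. -/
def Matroid.con (M : Matroid α) (X : Set α) : Matroid α := (M✶ ↾ (M.E \ X))✶

/-- `IsMinor M N` means `N` is obtained from `M` by a sequence of single-element
deletions and contractions. -/
inductive IsMinor : Matroid α → Matroid α → Prop
  | refl (M : Matroid α) : IsMinor M M
  | del (M N : Matroid α) (e : α) : IsMinor M N → IsMinor M (N.del {e})
  | con (M N : Matroid α) (e : α) : IsMinor M N → IsMinor M (N.con {e})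

/-- `YrSpec N r C₁ C₂` says that `N` is (isomorphic to) the matroid `Y_r`: the truncation
to rank `r` of the parallel connection of the two `r`-element circuits `C₁` and `C₂`,
which meet in a single basepoint. -/
def YrSpec (N : Matroid α) (r : ℕ) (C₁ C₂ : Set α) : Prop :=
  C₁.Finite ∧ C₂.Finite ∧ C₁.ncard = r ∧ C₂.ncard = r ∧ (C₁ ∩ C₂).ncard = 1 ∧
  N.E = C₁ ∪ C₂ ∧
  ∀ I, N.Indep I ↔ I ⊆ C₁ ∪ C₂ ∧ I.ncard ≤ r ∧ ¬ C₁ ⊆ I ∧ ¬ C₂ ⊆ I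

/-!
Laminarity passes to minors: circuits of `M ＼ D` are circuits of `M`, and a circuit `K` of
`M ／ X` extends to a circuit `C` of `M` with `K ⊆ C ⊆ K ∪ X`, so closures in the minor are
closures in `M` cut down by `X`. The matroid `Y_r` with `r ≥ 3` is not laminar: for
`u ∈ C₁ \ C₂` and `w ∈ C₂ \ C₁` the set `C₂ - w + u` is independent, so `u ∉ cl C₂`.

Conversely, let `N` be non-laminar with all single-element deletions and contractions laminar,
and let `C₁, C₂` be intersecting circuits with incomparable closures. Deleting an element outside
`C₁ ∪ C₂`, or contracting one of two common elements, would keep them incomparable, so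
`E = C₁ ∪ C₂` and `C₁ ∩ C₂ = {e}`. Further single-element minors show that `cl C₁` meets `C₂`
only in `e`, that every other circuit is spanning, and that `C₁ - e + b` is a base for every
`b ∈ C₂ - cl C₁`. Hence `|C₁| = |C₂| = r` is the rank and the independent sets are those of `Y_r`.
-/

namespace Matroid

variable {M N : Matroid α} {C C₁ C₂ D K₁ K₂ Q X : Set α} {a b e x y : α}

lemma isLaminar_iff : M.IsLaminar ↔ ∀ C₁ C₂, M.IsCircuit C₁ → M.IsCircuit C₂ →
    (C₁ ∩ C₂).Nonempty → M.closure C₁ ⊆ M.closure C₂ ∨ M.closure C₂ ⊆ M.closure C₁ := by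
  have h (C : Set α) : M.IsCircuit' C ↔ M.IsCircuit C := by
    rw [isCircuit_iff_forall_ssubset]; rfl
  simp only [IsLaminar, h]

lemma closure_union_subset_closure_union (h : M.closure K₁ ⊆ M.closure K₂) (X : Set α) :
    M.closure (K₁ ∪ X) ⊆ M.closure (K₂ ∪ X) := by
  rw [← closure_union_closure_left_eq, ← M.closure_union_closure_left_eq K₂]
  exact M.closure_subset_closure (union_subset_union_left X h)

lemma IsLaminar.delete (h : M.IsLaminar) (D : Set α) : (M ＼ D).IsLaminar := by
  rw [isLaminar_iff] at h ⊢
  intro C₁ C₂ h₁ h₂ hint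
  rw [delete_isCircuit_iff] at h₁ h₂
  rw [delete_closure_eq_of_disjoint _ h₁.2, delete_closure_eq_of_disjoint _ h₂.2]
  exact (h _ _ h₁.1 h₂.1 hint).imp sdiff_subset_sdiff_left sdiff_subset_sdiff_left

lemma IsLaminar.contract (h : M.IsLaminar) (X : Set α) : (M ／ X).IsLaminar := by
  rw [isLaminar_iff] at h ⊢
  intro K₁ K₂ h₁ h₂ hint
  obtain ⟨C₁, hC₁, hKC₁, hC₁K⟩ := h₁.exists_subset_isCircuit_of_contract
  obtain ⟨C₂, hC₂, hKC₂, hC₂K⟩ := h₂.exists_subset_isCircuit_of_contract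
  have hU {K C : Set α} (hKC : K ⊆ C) (hCK : C ⊆ K ∪ X) : K ∪ X = C ∪ X :=
    (union_subset_union_left X hKC).antisymm (union_subset hCK subset_union_right)
  rw [contract_closure_eq, contract_closure_eq, hU hKC₁ hC₁K, hU hKC₂ hC₂K]
  exact (h _ _ hC₁ hC₂ (hint.mono (inter_subset_inter hKC₁ hKC₂))).imp
    (fun h ↦ sdiff_subset_sdiff_left (closure_union_subset_closure_union h X))
    (fun h ↦ sdiff_subset_sdiff_left (closure_union_subset_closure_union h X))

lemma IsCircuit.contractElem_isCircuit_of_notMem_closure (hC : M.IsCircuit C) (hx : x ∈ M.E)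
    (hxC : x ∉ M.closure C) : (M ／ {x}).IsCircuit C := by
  have hxC' : x ∉ C := fun h ↦ hxC (M.subset_closure C hC.subset_ground h)
  have hxi : M.Indep {x} := indep_singleton.2 ⟨fun h ↦ hxC (h.mem_closure C), hx⟩
  refine isCircuit_iff_dep_forall_sdiff_singleton_indep.2
    ⟨hC.contract_dep (disjoint_singleton_left.2 hxC'), fun c hc ↦ ?_⟩
  rw [hxi.contract_indep_iff, union_singleton, (hC.sdiff_singleton_indep hc).insert_indep_iff,
    hC.closure_sdiff_singleton_eq]
  exact ⟨disjoint_singleton_right.2 fun h ↦ hxC' h.1, .inl ⟨hx, hxC⟩⟩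

lemma closure_comparable_of_delete (h : (M ＼ X).IsLaminar) (h₁ : M.IsCircuit C₁)
    (h₂ : M.IsCircuit C₂) (hX₁ : Disjoint C₁ X) (hX₂ : Disjoint C₂ X)
    (hint : (C₁ ∩ C₂).Nonempty) :
    M.closure C₁ ⊆ M.closure C₂ ∨ M.closure C₂ ⊆ M.closure C₁ := by
  have hlift {C C'} (hC : M.IsCircuit C) (hCX : Disjoint C X)
      (h : M.closure C \ X ⊆ M.closure C' \ X) : M.closure C ⊆ M.closure C' :=
    closure_subset_closure_of_subset_closure <|
      (subset_sdiff.2 ⟨M.subset_closure C hC.subset_ground, hCX⟩).trans (h.trans sdiff_subset)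
  have := isLaminar_iff.1 h C₁ C₂ (delete_isCircuit_iff.2 ⟨h₁, hX₁⟩)
    (delete_isCircuit_iff.2 ⟨h₂, hX₂⟩) hint
  rw [delete_closure_eq_of_disjoint _ hX₁, delete_closure_eq_of_disjoint _ hX₂] at this
  exact this.imp (hlift h₁ hX₁) (hlift h₂ hX₂)

lemma closure_union_comparable_of_contract (h : (M ／ X).IsLaminar) (hX : X ⊆ M.E)
    (h₁ : (M ／ X).IsCircuit K₁) (h₂ : (M ／ X).IsCircuit K₂) (hint : (K₁ ∩ K₂).Nonempty) :
    M.closure (K₁ ∪ X) ⊆ M.closure (K₂ ∪ X) ∨ M.closure (K₂ ∪ X) ⊆ M.closure (K₁ ∪ X) := by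
  have hlift {K K'} (hK : (M ／ X).IsCircuit K)
      (h : (M ／ X).closure K ⊆ (M ／ X).closure K') : M.closure (K ∪ X) ⊆ M.closure (K' ∪ X) := by
    rw [contract_closure_eq, contract_closure_eq] at h
    obtain ⟨hKE, hKX⟩ := subset_sdiff.1 hK.subset_ground
    refine closure_subset_closure_of_subset_closure (union_subset ?_ ?_)
    · exact (subset_sdiff.2 ⟨M.subset_closure_of_subset' subset_union_left hKE, hKX⟩).trans
        (h.trans sdiff_subset)
    · exact M.subset_closure_of_subset' subset_union_right hX
  exact (isLaminar_iff.1 h K₁ K₂ h₁ h₂ hint).imp (hlift h₁) (hlift h₂)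

lemma union_eq_ground_of_not_comparable (hdel : ∀ x ∈ N.E, (N ＼ {x}).IsLaminar)
    (h₁ : N.IsCircuit C₁) (h₂ : N.IsCircuit C₂) (hint : (C₁ ∩ C₂).Nonempty)
    (hnc₁ : ¬ N.closure C₁ ⊆ N.closure C₂) (hnc₂ : ¬ N.closure C₂ ⊆ N.closure C₁) :
    C₁ ∪ C₂ = N.E := by
  refine (union_subset h₁.subset_ground h₂.subset_ground).antisymm fun x hx ↦ by_contra fun hxC ↦ ?_
  rw [mem_union, not_or] at hxC
  exact (closure_comparable_of_delete (hdel x hx) h₁ h₂ (disjoint_singleton_right.2 hxC.1)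
    (disjoint_singleton_right.2 hxC.2) hint).elim hnc₁ hnc₂

lemma closure_comparable_of_inter_nontrivial (hcon : ∀ x ∈ N.E, (N ／ {x}).IsLaminar)
    (h₁ : N.IsCircuit C₁) (h₂ : N.IsCircuit C₂) (hnt : (C₁ ∩ C₂).Nontrivial) :
    N.closure C₁ ⊆ N.closure C₂ ∨ N.closure C₂ ⊆ N.closure C₁ := by
  obtain ⟨f, hf, g, hg, hfg⟩ := hnt
  have := closure_union_comparable_of_contract (hcon f (h₁.subset_ground hf.1))
    (singleton_subset_iff.2 (h₁.subset_ground hf.1))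
    (h₁.contractElem_isCircuit ⟨f, hf.1, g, hg.1, hfg⟩ hf.1)
    (h₂.contractElem_isCircuit ⟨f, hf.2, g, hg.2, hfg⟩ hf.2)
    ⟨g, ⟨hg.1, hfg.symm⟩, ⟨hg.2, hfg.symm⟩⟩
  rwa [sdiff_union_of_subset (singleton_subset_iff.2 hf.1),
    sdiff_union_of_subset (singleton_subset_iff.2 hf.2)] at this

structure IsYPair (N : Matroid α) (C₁ C₂ : Set α) (e : α) : Prop where
  isCircuit_left : N.IsCircuit C₁
  isCircuit_right : N.IsCircuit C₂
  inter_eq : C₁ ∩ C₂ = {e}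
  ground_eq : N.E = C₁ ∪ C₂
  not_subset_closure_left : ¬ C₁ ⊆ N.closure C₂
  not_subset_closure_right : ¬ C₂ ⊆ N.closure C₁

namespace IsYPair

lemma symm (h : N.IsYPair C₁ C₂ e) : N.IsYPair C₂ C₁ e :=
  ⟨h.isCircuit_right, h.isCircuit_left, inter_comm C₁ C₂ ▸ h.inter_eq,
    union_comm C₁ C₂ ▸ h.ground_eq, h.not_subset_closure_right, h.not_subset_closure_left⟩

lemma mem_left (h : N.IsYPair C₁ C₂ e) : e ∈ C₁ :=
  (h.inter_eq.symm ▸ mem_singleton e : e ∈ C₁ ∩ C₂).1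

lemma mem_right (h : N.IsYPair C₁ C₂ e) : e ∈ C₂ :=
  h.symm.mem_left

lemma eq_of_mem_inter (h : N.IsYPair C₁ C₂ e) (h₁ : y ∈ C₁) (h₂ : y ∈ C₂) : y = e := by
  have hy : y ∈ C₁ ∩ C₂ := ⟨h₁, h₂⟩
  rwa [h.inter_eq] at hy

lemma closure_subset_closure_right (h : N.IsYPair C₁ C₂ e)
    (hdel : ∀ x ∈ N.E, (N ＼ {x}).IsLaminar) (hQ : N.IsCircuit Q) (hyQ : y ∈ Q) (hy : y ∈ C₂)
    (hQC₁ : N.closure Q ⊆ N.closure C₁) (ha : a ∈ C₁) (hae : a ≠ e) (haQ : a ∉ Q) :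
    N.closure Q ⊆ N.closure C₂ := by
  by_contra hQC₂
  have hC₂Q : ¬ N.closure C₂ ⊆ N.closure Q := fun h' ↦ h.not_subset_closure_right
    ((N.subset_closure C₂ h.isCircuit_right.subset_ground).trans (h'.trans hQC₁))
  have ha' : a ∈ Q ∪ C₂ := by
    rw [union_eq_ground_of_not_comparable hdel hQ h.isCircuit_right ⟨y, hyQ, hy⟩ hQC₂ hC₂Q]
    exact h.isCircuit_left.subset_ground ha
  exact hae (h.eq_of_mem_inter ha (ha'.resolve_left haQ))

/-- The set `S = C₁ ∩ cl C₂` is independent. If `y ∈ cl C₁`, then `y` is spanned by `S - w` for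
every `w ∈ C₁ - e`, so the circuit through `y` in `S + y` lies in `{y, e} ⊆ C₂`; it is then `C₂`,
which would be spanned by `C₁`. -/
lemma eq_of_mem_closure (h : N.IsYPair C₁ C₂ e) (hdel : ∀ x ∈ N.E, (N ＼ {x}).IsLaminar)
    (hy : y ∈ C₂) (hycl : y ∈ N.closure C₁) : y = e := by
  by_contra hye
  have hyC₁ : y ∉ C₁ := fun h' ↦ hye (h.eq_of_mem_inter h' hy)
  obtain ⟨a, ha, hacl⟩ := not_subset.1 h.not_subset_closure_left
  set S := C₁ ∩ N.closure C₂
  have hSC₁ : S ⊆ C₁ := inter_subset_left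
  have hS : N.Indep S :=
    (h.isCircuit_left.sdiff_singleton_indep ha).subset fun t ht ↦
      ⟨ht.1, fun hta ↦ hacl (hta ▸ ht.2)⟩
  have hyS : ∀ w ∈ C₁, w ≠ e → y ∈ N.closure (S \ {w}) := by
    intro w hw hwe
    obtain ⟨Q, hQc, hQ, hyQ⟩ := exists_isCircuit_of_mem_closure
      (h.isCircuit_left.closure_sdiff_singleton_eq w ▸ hycl) fun h' ↦ hyC₁ h'.1
    have hQC₁ : N.closure Q ⊆ N.closure C₁ := by
      rw [← closure_insert_eq_of_mem_closure hycl]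
      exact N.closure_subset_closure (hQc.trans (insert_subset_insert sdiff_subset))
    have hQC₂ := h.closure_subset_closure_right hdel hQ hyQ hy hQC₁ hw hwe
      fun hwQ ↦ ((hQc hwQ).resolve_left (ne_of_mem_of_not_mem hw hyC₁)).2 rfl
    refine N.closure_subset_closure (fun t ht ↦ ?_) (hQ.mem_closure_sdiff_singleton_of_mem hyQ)
    obtain ⟨htC₁, htw⟩ := (hQc ht.1).resolve_left ht.2
    exact ⟨⟨htC₁, hQC₂ (N.subset_closure Q hQ.subset_ground ht.1)⟩, htw⟩
  obtain ⟨P, hPS, hP, hyP⟩ := exists_isCircuit_of_mem_closure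
    (N.closure_subset_closure sdiff_subset (hyS a ha fun hae ↦ hacl (hae ▸ N.subset_closure C₂
      h.isCircuit_right.subset_ground h.mem_right))) fun h' ↦ hyC₁ (hSC₁ h')
  have hPC₂ : P ⊆ C₂ := by
    intro t ht
    obtain rfl | htS := hPS ht
    · exact hy
    by_cases hte : t = e
    · exact hte ▸ h.mem_right
    refine (hS.notMem_closure_sdiff_of_mem htS ?_).elim
    rw [← closure_insert_eq_of_mem_closure (hyS t (hSC₁ htS) hte)]
    refine N.closure_subset_closure (fun s hs ↦ ?_) (hP.mem_closure_sdiff_singleton_of_mem ht)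
    obtain rfl | hsS := hPS hs.1
    · exact mem_insert _ _
    · exact .inr ⟨hsS, hs.2⟩
  rw [hP.eq_of_subset_isCircuit h.isCircuit_right hPC₂] at hPS
  refine h.not_subset_closure_right (hPS.trans (insert_subset hycl ?_))
  exact hSC₁.trans (N.subset_closure C₁ h.isCircuit_left.subset_ground)

lemma subset_left_of_inter_subsingleton (h : N.IsYPair C₁ C₂ e)
    (hdel : ∀ x ∈ N.E, (N ＼ {x}).IsLaminar) (hD : N.IsCircuit D) (hDC₂ : (D ∩ C₂).Subsingleton) :
    D ⊆ C₁ := by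
  by_contra hDC₁
  obtain ⟨w, hwD, hwC₁⟩ := not_subset.1 hDC₁
  have hmem {t} (ht : t ∈ D) : t ∈ C₁ ∪ C₂ := h.ground_eq ▸ hD.subset_ground ht
  have hwC₂ : w ∈ C₂ := (hmem hwD).resolve_left hwC₁
  have hsub : D \ {w} ⊆ C₁ := fun t ht ↦
    (hmem ht.1).resolve_right fun htC₂ ↦ ht.2 (hDC₂ ⟨ht.1, htC₂⟩ ⟨hwD, hwC₂⟩)
  have hw := N.closure_subset_closure hsub (hD.mem_closure_sdiff_singleton_of_mem hwD)
  exact hwC₁ (h.eq_of_mem_closure hdel hwC₂ hw ▸ h.mem_left)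

lemma closure_left_subset_closure (h : N.IsYPair C₁ C₂ e)
    (hdel : ∀ x ∈ N.E, (N ＼ {x}).IsLaminar) (hcon : ∀ x ∈ N.E, (N ／ {x}).IsLaminar)
    (hD : N.IsCircuit D) (hD₁ : D ≠ C₁) (hD₂ : D ≠ C₂) : N.closure C₁ ⊆ N.closure D := by
  have hnt₁ : (D ∩ C₁).Nontrivial := not_subsingleton_iff.1 fun h' ↦ hD₂ <|
    hD.eq_of_subset_isCircuit h.isCircuit_right (h.symm.subset_left_of_inter_subsingleton hdel hD h')
  have hnt₂ : (D ∩ C₂).Nontrivial := not_subsingleton_iff.1 fun h' ↦ hD₁ <|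
    hD.eq_of_subset_isCircuit h.isCircuit_left (h.subset_left_of_inter_subsingleton hdel hD h')
  refine (closure_comparable_of_inter_nontrivial hcon hD h.isCircuit_left hnt₁).resolve_left
    fun hDC₁ ↦ hnt₂.not_subsingleton ((subsingleton_singleton (a := e)).anti fun t ht ↦ ?_)
  exact h.eq_of_mem_closure hdel ht.2 (hDC₁ (N.subset_closure D hD.subset_ground ht.1))

lemma spanning_of_isCircuit (h : N.IsYPair C₁ C₂ e)
    (hdel : ∀ x ∈ N.E, (N ＼ {x}).IsLaminar) (hcon : ∀ x ∈ N.E, (N ／ {x}).IsLaminar)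
    (hD : N.IsCircuit D) (hD₁ : D ≠ C₁) (hD₂ : D ≠ C₂) : N.Spanning D := by
  rw [spanning_iff_ground_subset_closure hD.subset_ground, h.ground_eq]
  exact union_subset
    ((N.subset_closure C₁ h.isCircuit_left.subset_ground).trans
      (h.closure_left_subset_closure hdel hcon hD hD₁ hD₂))
    ((N.subset_closure C₂ h.isCircuit_right.subset_ground).trans
      (h.symm.closure_left_subset_closure hdel hcon hD hD₂ hD₁))

/-- For `x ∈ C₂ - {b, e}`, the circuits `C₁` and `C₂ - x` of `N ／ x` meet in `e`, and laminarity
of `N ／ x` forces `b ∈ cl (C₁ + x)`; exchange then puts `x` in `cl (C₁ + b)`. -/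
lemma ground_subset_closure_insert (h : N.IsYPair C₁ C₂ e)
    (hdel : ∀ x ∈ N.E, (N ＼ {x}).IsLaminar) (hcon : ∀ x ∈ N.E, (N ／ {x}).IsLaminar)
    (hb : b ∈ C₂) (hbcl : b ∉ N.closure C₁) : N.E ⊆ N.closure (insert b C₁) := by
  have hC₁E := h.isCircuit_left.subset_ground
  have hC₂E := h.isCircuit_right.subset_ground
  have hbC₁ : insert b C₁ ⊆ N.closure (insert b C₁) :=
    N.subset_closure _ (insert_subset (hC₂E hb) hC₁E)
  rw [h.ground_eq]
  refine union_subset ((subset_insert b C₁).trans hbC₁) fun x hx ↦ ?_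
  obtain rfl | hxb := eq_or_ne x b
  · exact hbC₁ (mem_insert x C₁)
  obtain rfl | hxe := eq_or_ne x e
  · exact hbC₁ (mem_insert_of_mem b h.mem_left)
  have hxcl : x ∉ N.closure C₁ := fun h' ↦ hxe (h.eq_of_mem_closure hdel hx h')
  have hcmp := closure_union_comparable_of_contract (hcon x (hC₂E hx))
    (singleton_subset_iff.2 (hC₂E hx))
    (h.isCircuit_left.contractElem_isCircuit_of_notMem_closure (hC₂E hx) hxcl)
    (h.isCircuit_right.contractElem_isCircuit ⟨x, hx, e, h.mem_right, hxe⟩ hx)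
    ⟨e, h.mem_left, h.mem_right, hxe.symm⟩
  rw [sdiff_union_of_subset (singleton_subset_iff.2 hx), union_singleton] at hcmp
  obtain ⟨a, ha, hacl⟩ := not_subset.1 h.not_subset_closure_left
  rcases hcmp with h' | h'
  · exact (hacl <| h' <| N.subset_closure _ (insert_subset (hC₂E hx) hC₁E)
      (mem_insert_of_mem x ha)).elim
  · exact (closure_exchange ⟨h' (N.subset_closure C₂ hC₂E hb), hbcl⟩).1

lemma isBase_insert_sdiff (h : N.IsYPair C₁ C₂ e)
    (hdel : ∀ x ∈ N.E, (N ＼ {x}).IsLaminar) (hcon : ∀ x ∈ N.E, (N ／ {x}).IsLaminar)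
    (hb : b ∈ C₂) (hbcl : b ∉ N.closure C₁) : N.IsBase (insert b (C₁ \ {e})) := by
  have hcl := h.isCircuit_left.closure_sdiff_singleton_eq e
  have hI : N.Indep (insert b (C₁ \ {e})) := by
    rw [(h.isCircuit_left.sdiff_singleton_indep h.mem_left).insert_indep_iff, hcl]
    exact .inl ⟨h.isCircuit_right.subset_ground hb, hbcl⟩
  refine hI.isBase_of_ground_subset_closure
    ((h.ground_subset_closure_insert hdel hcon hb hbcl).trans ?_)
  rw [← closure_insert_closure_eq_closure_insert, ← hcl, closure_insert_closure_eq_closure_insert]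

lemma three_le_ncard [N.Finite] (h : N.IsYPair C₁ C₂ e) : 3 ≤ C₁.ncard := by
  obtain ⟨a, ha, hacl⟩ := not_subset.1 h.not_subset_closure_left
  obtain ⟨c, hc, hccl⟩ : ∃ c ∈ C₁ \ {a}, c ∉ N.closure C₂ := by
    by_contra! h'
    exact hacl (closure_subset_closure_of_subset_closure h'
      (h.isCircuit_left.mem_closure_sdiff_singleton_of_mem ha))
  have he : e ∈ N.closure C₂ := N.subset_closure C₂ h.isCircuit_right.subset_ground h.mem_right
  exact (two_lt_ncard_iff (N.set_finite C₁ h.isCircuit_left.subset_ground)).2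
    ⟨e, a, c, h.mem_left, ha, hc.1, fun h' ↦ hacl (h' ▸ he), fun h' ↦ hccl (h' ▸ he), Ne.symm hc.2⟩

/-- Any independent set extends to a base, and a dependent set contains a circuit `D` other than
`C₁, C₂`; such a `D` is spanning, so `D` minus a point is a base and `D` has `r + 1` elements. -/
lemma yrSpec [N.Finite] (h : N.IsYPair C₁ C₂ e)
    (hdel : ∀ x ∈ N.E, (N ＼ {x}).IsLaminar) (hcon : ∀ x ∈ N.E, (N ／ {x}).IsLaminar) :
    YrSpec N C₁.ncard C₁ C₂ := by
  obtain ⟨a, ha, hacl⟩ := not_subset.1 h.not_subset_closure_left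
  obtain ⟨b, hb, hbcl⟩ := not_subset.1 h.not_subset_closure_right
  have hB₁ := h.isBase_insert_sdiff hdel hcon hb hbcl
  have hB₂ := h.symm.isBase_insert_sdiff hdel hcon ha hacl
  have hcard (B) (hB : N.IsBase B) : B.ncard = C₁.ncard := by
    rw [hB.ncard_eq_ncard_of_isBase hB₁, ncard_exchange (fun h' ↦ hbcl (N.subset_closure C₁
      h.isCircuit_left.subset_ground h')) h.mem_left]
  refine ⟨N.set_finite C₁ h.isCircuit_left.subset_ground,
    N.set_finite C₂ h.isCircuit_right.subset_ground, rfl, ?_, by rw [h.inter_eq, ncard_singleton],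
    h.ground_eq, fun I ↦ ⟨fun hI ↦ ?_, fun ⟨hIE, hIr, h₁, h₂⟩ ↦ ?_⟩⟩
  · rw [← hcard _ hB₂, ncard_exchange (fun h' ↦ hacl (N.subset_closure C₂
      h.isCircuit_right.subset_ground h')) h.mem_right]
  · obtain ⟨B, hB, hIB⟩ := hI.exists_isBase_superset
    exact ⟨h.ground_eq ▸ hI.subset_ground,
      (ncard_le_ncard hIB (N.set_finite B hB.subset_ground)).trans (hcard B hB).le,
      fun h' ↦ h.isCircuit_left.not_indep (hI.subset h'),
      fun h' ↦ h.isCircuit_right.not_indep (hI.subset h')⟩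
  by_contra hI
  obtain ⟨D, hDI, hD⟩ := (show N.Dep I from ⟨hI, h.ground_eq ▸ hIE⟩).exists_isCircuit_subset
  obtain ⟨d, hd⟩ := hD.nonempty
  have hDs := h.spanning_of_isCircuit hdel hcon hD (by rintro rfl; exact h₁ hDI)
    (by rintro rfl; exact h₂ hDI)
  have hDd := hcard _ <| (hD.sdiff_singleton_indep hd).isBase_of_spanning
    ⟨hD.closure_sdiff_singleton_eq d ▸ hDs.closure_eq, sdiff_subset.trans hD.subset_ground⟩
  have := ncard_le_ncard hDI (N.set_finite I (h.ground_eq ▸ hIE))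
  have := ncard_sdiff_singleton_add_one hd (N.set_finite D hD.subset_ground)
  omega

end IsYPair

lemma exists_isYPair (hdel : ∀ x ∈ N.E, (N ＼ {x}).IsLaminar)
    (hcon : ∀ x ∈ N.E, (N ／ {x}).IsLaminar) (hN : ¬ N.IsLaminar) :
    ∃ C₁ C₂ e, N.IsYPair C₁ C₂ e := by
  simp only [isLaminar_iff, not_forall, not_or] at hN
  obtain ⟨C₁, C₂, h₁, h₂, ⟨e, he⟩, hnc₁, hnc₂⟩ := hN
  have hsub : (C₁ ∩ C₂).Subsingleton := not_nontrivial_iff.1 fun hnt ↦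
    (closure_comparable_of_inter_nontrivial hcon h₁ h₂ hnt).elim hnc₁ hnc₂
  refine ⟨C₁, C₂, e, h₁, h₂, hsub.eq_singleton_of_mem he,
    (union_eq_ground_of_not_comparable hdel h₁ h₂ ⟨e, he⟩ hnc₁ hnc₂).symm, ?_, ?_⟩
  · rwa [← closure_subset_closure_iff_subset_closure h₁.subset_ground]
  · rwa [← closure_subset_closure_iff_subset_closure h₂.subset_ground]

end Matroid

theorem IsMinor.trans {M N P : Matroid α} (h₁ : _root_.IsMinor M N) (h₂ : _root_.IsMinor N P) :
    _root_.IsMinor M P := by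
  induction h₂ with
  | refl => exact h₁
  | del P e _ ih => exact .del M P e ih
  | con P e _ ih => exact .con M P e ih

theorem Matroid.IsLaminar.of_isMinor {M N : Matroid α} (hM : M.IsLaminar)
    (h : _root_.IsMinor M N) : N.IsLaminar := by
  induction h with
  | refl => exact hM
  | del N e _ ih => exact ih.delete {e}
  | con N e _ ih => exact ih.contract {e}

namespace YrSpec

variable {N : Matroid α} {r : ℕ} {C₁ C₂ : Set α}

lemma symm (h : YrSpec N r C₁ C₂) : YrSpec N r C₂ C₁ := by
  obtain ⟨hf₁, hf₂, hc₁, hc₂, hc, hE, hind⟩ := h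
  refine ⟨hf₂, hf₁, hc₂, hc₁, inter_comm C₁ C₂ ▸ hc, union_comm C₁ C₂ ▸ hE, fun I ↦ ?_⟩
  rw [hind, union_comm]
  tauto

lemma isCircuit_left (h : YrSpec N r C₁ C₂) : N.IsCircuit C₁ := by
  obtain ⟨hf₁, -, hc₁, hc₂, -, hE, hind⟩ := h
  refine isCircuit_iff_forall_ssubset.2 ⟨⟨fun hi ↦ ((hind C₁).1 hi).2.2.1 subset_rfl,
    hE ▸ subset_union_left⟩, fun I hI ↦ (hind I).2 ⟨hI.subset.trans subset_union_left, ?_,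
    hI.not_subset, fun h ↦ ?_⟩⟩
  · exact hc₁ ▸ (ncard_lt_ncard hI hf₁).le
  · have := ncard_le_ncard h (hf₁.subset hI.subset)
    have := ncard_lt_ncard hI hf₁
    omega

lemma not_subset_closure_left (h : YrSpec N r C₁ C₂) (hr : 3 ≤ r) : ¬ C₁ ⊆ N.closure C₂ := by
  have hC₂ : N.IsCircuit C₂ := h.symm.isCircuit_left
  obtain ⟨hf₁, -, hc₁, hc₂, hc, -, hind⟩ := h
  obtain ⟨u, hu₁, hu₂⟩ : ∃ u ∈ C₁, u ∉ C₂ := not_subset.1 fun h' ↦ by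
    rw [inter_eq_self_of_subset_left h'] at hc; omega
  obtain ⟨w, hw₂, hw₁⟩ : ∃ w ∈ C₂, w ∉ C₁ := not_subset.1 fun h' ↦ by
    rw [inter_eq_self_of_subset_right h'] at hc; omega
  have hJ : N.Indep (insert u (C₂ \ {w})) := by
    refine (hind _).2 ⟨insert_subset (.inl hu₁) (sdiff_subset.trans subset_union_right),
      (ncard_exchange hu₂ hw₂).trans_le hc₂.le, fun h' ↦ ?_, fun h' ↦ ?_⟩
    · have hsub : C₁ \ {u} ⊆ C₁ ∩ C₂ := fun t ht ↦
        ⟨ht.1, ((h' ht.1).resolve_left ht.2).1⟩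
      have := ncard_le_ncard hsub (hf₁.subset inter_subset_left)
      rw [ncard_sdiff_singleton_of_mem hu₁] at this
      omega
    · rcases h' hw₂ with rfl | hw
      · exact hu₂ hw₂
      · exact hw.2 rfl
  intro h'
  have := hJ.notMem_closure_sdiff_of_mem (mem_insert u _)
  rw [insert_sdiff_self_of_notMem (fun h ↦ hu₂ h.1), hC₂.closure_sdiff_singleton_eq] at this
  exact this (h' hu₁)

lemma not_isLaminar (h : YrSpec N r C₁ C₂) (hr : 3 ≤ r) : ¬ N.IsLaminar := by
  have hne : (C₁ ∩ C₂).Nonempty := nonempty_of_ncard_ne_zero (by rw [h.2.2.2.2.1]; simp)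
  rw [Matroid.isLaminar_iff]
  intro hN
  rcases hN C₁ C₂ h.isCircuit_left h.symm.isCircuit_left hne with h₁ | h₁
  · exact h.not_subset_closure_left hr
      ((N.subset_closure C₁ h.isCircuit_left.subset_ground).trans h₁)
  · exact h.symm.not_subset_closure_left hr
      ((N.subset_closure C₂ h.symm.isCircuit_left.subset_ground).trans h₁)

end YrSpec

theorem exists_isMinor_yrSpec_of_not_isLaminar {M : Matroid α} (hfin : M.E.Finite)
    (hM : ¬ M.IsLaminar) : ∃ N r C₁ C₂, _root_.IsMinor M N ∧ 3 ≤ r ∧ YrSpec N r C₁ C₂ := by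
  induction hn : M.E.ncard using Nat.strong_induction_on generalizing M with
  | _ n ih =>
  by_cases hmin : ∀ x ∈ M.E, (M ＼ {x}).IsLaminar ∧ (M ／ {x}).IsLaminar
  · have : M.Finite := ⟨hfin⟩
    obtain ⟨C₁, C₂, e, hY⟩ :=
      exists_isYPair (fun x hx ↦ (hmin x hx).1) (fun x hx ↦ (hmin x hx).2) hM
    exact ⟨M, _, C₁, C₂, .refl M, hY.three_le_ncard,
      hY.yrSpec (fun x hx ↦ (hmin x hx).1) (fun x hx ↦ (hmin x hx).2)⟩
  push Not at hmin
  obtain ⟨x, hx, hxM⟩ := hmin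
  obtain ⟨M', hMM', hM'E, hM'⟩ :
      ∃ M', _root_.IsMinor M M' ∧ M'.E = M.E \ {x} ∧ ¬ M'.IsLaminar := by
    by_cases hdel : (M ＼ {x}).IsLaminar
    · exact ⟨M ／ {x}, .con M M x (.refl M), rfl, hxM hdel⟩
    · exact ⟨M ＼ {x}, .del M M x (.refl M), rfl, hdel⟩
  obtain ⟨N, r, C₁, C₂, hM'N, hr, hN⟩ := ih _ (hn ▸ hM'E ▸ ncard_sdiff_singleton_lt_of_mem hx hfin)
    (hM'E ▸ hfin.sdiff) hM' rfl
  exact ⟨N, r, C₁, C₂, hMM'.trans hM'N, hr, hN⟩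

theorem stmt_16 (M : Matroid α) (hfin : M.E.Finite) :
    M.IsLaminar ↔ ∀ N, _root_.IsMinor M N → ∀ r, 3 ≤ r → ∀ C₁ C₂, ¬ YrSpec N r C₁ C₂ := by
  refine ⟨fun hM N hMN r hr C₁ C₂ hN ↦ hN.not_isLaminar hr (hM.of_isMinor hMN), fun h ↦ ?_⟩
  by_contra hM
  obtain ⟨N, r, C₁, C₂, hMN, hr, hN⟩ := exists_isMinor_yrSpec_of_not_isLaminar hfin hM
  exact h N hMN r hr C₁ C₂ hN
end
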